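/- arXiv:2407.04686 — 2 statements merged into one kernel-verified Lean document; each statement's English description precedes it below -/
import Mathlib

section
/- Triangle-type bound for truncation under projection noise (inequality (5.1) in the paper). Let Q ∈ ℝ^{m1×r} have orthonormal columns, let B ∈ ℝ^{m1×m2}, E2 ∈ ℝ^{r×m2}, and let k be a natural number. If T1 is any best rank-k approximation of Qᵀ B + E2 and T2 is any best rank-k approximation of Qᵀ B, then ‖B − Q T1‖_F ≤ 2 ‖E2‖_F + ‖B − Q T2‖_F. -/
open Matrix

noncomputable def frob {m n : ℕ} (A : Matrix (Fin m) (Fin n) ℝ) : ℝ :=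
  Real.sqrt (∑ i, ∑ j, (A i j) ^ 2)

def IsBestRankApprox {a b : ℕ} (k : ℕ) (X T : Matrix (Fin a) (Fin b) ℝ) : Prop :=
  T.rank ≤ k ∧ ∀ Z : Matrix (Fin a) (Fin b) ℝ, Z.rank ≤ k → frob (X - T) ≤ frob (X - Z)

noncomputable def Saux {m n : ℕ} (A : Matrix (Fin m) (Fin n) ℝ) : ℝ :=
  ∑ i, ∑ j, (A i j) ^ 2

lemma Saux_nonneg {m n : ℕ} (A : Matrix (Fin m) (Fin n) ℝ) : 0 ≤ Saux A := by
  apply Finset.sum_nonneg; intro i _; apply Finset.sum_nonneg; intro j _; positivity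

lemma frob_eq_sqrt_S {m n : ℕ} (A : Matrix (Fin m) (Fin n) ℝ) : frob A = Real.sqrt (Saux A) := rfl

lemma frob_nonneg {m n : ℕ} (A : Matrix (Fin m) (Fin n) ℝ) : 0 ≤ frob A := Real.sqrt_nonneg _

lemma frob_sq {m n : ℕ} (A : Matrix (Fin m) (Fin n) ℝ) : frob A ^ 2 = Saux A :=
  Real.sq_sqrt (Saux_nonneg A)

lemma Saux_eq_trace {m n : ℕ} (A : Matrix (Fin m) (Fin n) ℝ) :
    Saux A = trace (Aᵀ * A) := by
  simp [Saux, trace, Matrix.mul_apply, Matrix.diag, sq]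
  exact Finset.sum_comm

lemma frob_neg {m n : ℕ} (A : Matrix (Fin m) (Fin n) ℝ) : frob (-A) = frob A := by
  simp [frob]

lemma frob_eq_norm {m n : ℕ} (A : Matrix (Fin m) (Fin n) ℝ) :
    frob A = ‖(WithLp.equiv 2 (Fin m × Fin n → ℝ)).symm (fun p => A p.1 p.2)‖ := by
  rw [EuclideanSpace.norm_eq, frob]
  congr 1
  rw [Fintype.sum_prod_type]
  simp [sq_abs]

lemma frob_triangle {m n : ℕ} (X Y : Matrix (Fin m) (Fin n) ℝ) :
    frob (X + Y) ≤ frob X + frob Y := by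
  rw [frob_eq_norm, frob_eq_norm X, frob_eq_norm Y]
  have : (WithLp.equiv 2 (Fin m × Fin n → ℝ)).symm (fun p => (X + Y) p.1 p.2)
      = (WithLp.equiv 2 (Fin m × Fin n → ℝ)).symm (fun p => X p.1 p.2)
      + (WithLp.equiv 2 (Fin m × Fin n → ℝ)).symm (fun p => Y p.1 p.2) := by
    ext p; simp [Matrix.add_apply]
  rw [this]
  exact norm_add_le _ _

lemma frob_sub_le {m n : ℕ} (X Y Z : Matrix (Fin m) (Fin n) ℝ) :
    frob (X - Z) ≤ frob (X - Y) + frob (Y - Z) := by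
  have : X - Z = (X - Y) + (Y - Z) := by abel
  rw [this]; exact frob_triangle _ _

/-- Pythagoras: for Q with orthonormal columns. -/
lemma pythagoras {m1 m2 r : ℕ} (Q : Matrix (Fin m1) (Fin r) ℝ) (hQ : Qᵀ * Q = 1)
    (B : Matrix (Fin m1) (Fin m2) ℝ) (T : Matrix (Fin r) (Fin m2) ℝ) :
    Saux (B - Q * T) = Saux (B - Q * (Qᵀ * B)) + Saux (Qᵀ * B - T) := by
  set R := B - Q * (Qᵀ * B) with hR
  set D := Qᵀ * B - T with hD
  have hQR : Qᵀ * R = 0 := by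
    rw [hR, Matrix.mul_sub, ← Matrix.mul_assoc, ← Matrix.mul_assoc, hQ, Matrix.one_mul, sub_self]
  have hdecomp : B - Q * T = R + Q * D := by
    rw [hR, hD, Matrix.mul_sub, ← Matrix.mul_assoc]
    abel
  rw [hdecomp, Saux_eq_trace, Saux_eq_trace R, Saux_eq_trace D]
  rw [Matrix.transpose_add, Matrix.transpose_mul]
  rw [Matrix.add_mul, Matrix.mul_add, Matrix.mul_add]
  have h1 : Rᵀ * (Q * D) = 0 := by
    rw [← Matrix.mul_assoc]
    have : Rᵀ * Q = 0 := by
      have := congrArg Matrix.transpose hQR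
      simpa [Matrix.transpose_mul] using this
    rw [this, Matrix.zero_mul]
  have h2 : Dᵀ * Qᵀ * R = 0 := by
    rw [Matrix.mul_assoc, hQR, Matrix.mul_zero]
  have h3 : Dᵀ * Qᵀ * (Q * D) = Dᵀ * D := by
    rw [Matrix.mul_assoc, ← Matrix.mul_assoc Qᵀ, hQ, Matrix.one_mul]
  rw [h1, h2, h3]
  simp [Matrix.trace_add]

theorem stmt1 {m1 m2 r : ℕ} (k : ℕ)
    (Q : Matrix (Fin m1) (Fin r) ℝ) (hQ : Qᵀ * Q = 1)
    (B : Matrix (Fin m1) (Fin m2) ℝ) (E2 : Matrix (Fin r) (Fin m2) ℝ)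
    (T1 T2 : Matrix (Fin r) (Fin m2) ℝ)
    (hT1 : IsBestRankApprox k (Qᵀ * B + E2) T1)
    (hT2 : IsBestRankApprox k (Qᵀ * B) T2) :
    frob (B - Q * T1) ≤ 2 * frob E2 + frob (B - Q * T2) := by
  set c := Saux (B - Q * (Qᵀ * B)) with hc
  have hc0 : 0 ≤ c := Saux_nonneg _
  set a := frob (Qᵀ * B - T1) with ha
  set b := frob (Qᵀ * B - T2) with hb
  set e := frob E2 with he
  have ha0 : 0 ≤ a := frob_nonneg _
  have hb0 : 0 ≤ b := frob_nonneg _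
  have he0 : 0 ≤ e := frob_nonneg _
  -- key: a ≤ b + 2e
  have key : a ≤ b + 2 * e := by
    have s1 : frob (Qᵀ * B - T1) ≤ frob (Qᵀ * B - (Qᵀ * B + E2)) + frob ((Qᵀ * B + E2) - T1) :=
      frob_sub_le _ _ _
    have s2 : frob (Qᵀ * B - (Qᵀ * B + E2)) = e := by
      have : Qᵀ * B - (Qᵀ * B + E2) = -E2 := by abel
      rw [this, frob_neg, he]
    have s3 : frob ((Qᵀ * B + E2) - T1) ≤ frob ((Qᵀ * B + E2) - T2) := hT1.2 T2 hT2.1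
    have s4 : frob ((Qᵀ * B + E2) - T2) ≤ frob ((Qᵀ * B + E2) - (Qᵀ * B)) + frob (Qᵀ * B - T2) :=
      frob_sub_le _ _ _
    have s5 : frob ((Qᵀ * B + E2) - (Qᵀ * B)) = e := by
      rw [he]; congr 1; abel
    rw [ha]
    linarith
  -- Pythagoras on both sides
  have p1 : frob (B - Q * T1) = Real.sqrt (c + a ^ 2) := by
    rw [frob_eq_sqrt_S, pythagoras Q hQ B T1, ← hc, ha, frob_sq]
  have p2 : frob (B - Q * T2) = Real.sqrt (c + b ^ 2) := by
    rw [frob_eq_sqrt_S, pythagoras Q hQ B T2, ← hc, hb, frob_sq]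
  rw [p1, p2]
  have step1 : Real.sqrt (c + a ^ 2) ≤ Real.sqrt (c + (b + 2 * e) ^ 2) := by
    apply Real.sqrt_le_sqrt
    nlinarith
  refine step1.trans ?_
  set s := Real.sqrt (c + b ^ 2) with hs
  have hsnn : 0 ≤ s := Real.sqrt_nonneg _
  have hs2 : s ^ 2 = c + b ^ 2 := Real.sq_sqrt (by positivity)
  have hsb : b ≤ s := by nlinarith
  calc Real.sqrt (c + (b + 2 * e) ^ 2) ≤ Real.sqrt ((2 * e + s) ^ 2) := by
        apply Real.sqrt_le_sqrt; nlinarith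
    _ = 2 * e + s := Real.sqrt_sq (by linarith)
end

section
/- Pythagorean identity for the oblique projection error (equation (5.4) in the paper). Let B ∈ ℝ^{m1×m2}, Ω ∈ ℝ^{m2×s}, with SVD setup for B and k ≤ min(m1, m2). Assume rank(Ω_top) = k and set M = Ω_top† V_topᵀ ∈ ℝ^{s×m2}. Then ‖B (I − Ω M)‖_F² = ‖Σ_bot‖_F² + ‖Σ_bot Ω_bot Ω_top†‖_F². -/
open Matrix

/-- Moore–Penrose pseudoinverse of a full row rank matrix: `W† = Wᵀ (W Wᵀ)⁻¹`. -/
noncomputable def pinvR {k s : ℕ} (W : Matrix (Fin k) (Fin s) ℝ) :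
    Matrix (Fin s) (Fin k) ℝ :=
  Wᵀ * (W * Wᵀ)⁻¹

/-- Embedding of the "bottom" indices `{k, …, m-1}` (as `Fin (m - k)`) into `Fin m`. -/
def botIdx {m k : ℕ} (hk : k ≤ m) (j : Fin (m - k)) : Fin m :=
  ⟨k + j.1, by have := j.isLt; omega⟩

/-!
Write `P = Ω Ω_top† V_topᵀ`. Since `Ω_top Ω_top† = 1`, the top block `V_topᵀ (1 - P)` of
`Vᵀ (1 - P)` vanishes, so only the bottom-right block `Σ_bot` of the diagonal `Σ` survives in
`B (1 - P) = U Σ Vᵀ (1 - P)`. Discarding the factors with orthonormal columns, the error has the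
Frobenius norm of `Σ_bot V_botᵀ - (Σ_bot Ω_bot Ω_top†) V_topᵀ`, and since the rows of `V_botᵀ` and
`V_topᵀ` are orthonormal and mutually orthogonal, the two terms contribute separately.
-/

section Frobenius

variable {m n p : ℕ}

theorem frob_eq_sqrt_trace (A : Matrix (Fin m) (Fin n) ℝ) :
    frob A = Real.sqrt (A * Aᵀ).trace := by
  simp [frob, trace, mul_apply, sq]

theorem frob_sq_eq_trace (A : Matrix (Fin m) (Fin n) ℝ) : frob A ^ 2 = (A * Aᵀ).trace := by
  rw [frob, Real.sq_sqrt (by positivity)]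
  simp [trace, mul_apply, sq]

theorem frob_mul_of_transpose_mul_self_eq_one {U : Matrix (Fin m) (Fin p) ℝ} (hU : Uᵀ * U = 1)
    (A : Matrix (Fin p) (Fin n) ℝ) : frob (U * A) = frob A := by
  rw [frob_eq_sqrt_trace, frob_eq_sqrt_trace, transpose_mul, Matrix.mul_assoc, trace_mul_comm,
    Matrix.mul_assoc A, Matrix.mul_assoc Aᵀ, hU, Matrix.mul_one]

theorem frob_sq_mul_sub_mul {q : ℕ} (A : Matrix (Fin m) (Fin n) ℝ)
    (C : Matrix (Fin m) (Fin q) ℝ)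
    {P : Matrix (Fin n) (Fin p) ℝ} {Q : Matrix (Fin q) (Fin p) ℝ}
    (hP : P * Pᵀ = 1) (hQ : Q * Qᵀ = 1) (hPQ : P * Qᵀ = 0) :
    frob (A * P - C * Q) ^ 2 = frob A ^ 2 + frob C ^ 2 := by
  have hQP : Q * Pᵀ = 0 := by
    rw [← transpose_transpose Q, ← transpose_mul, hPQ, transpose_zero]
  have hcross : (A * P - C * Q) * (A * P - C * Q)ᵀ = A * Aᵀ + C * Cᵀ := by
    simp only [transpose_sub, transpose_mul, Matrix.sub_mul, Matrix.mul_sub, Matrix.mul_assoc]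
    simp only [← Matrix.mul_assoc P, ← Matrix.mul_assoc Q, hP, hQ, hPQ, hQP]
    simp
  rw [frob_sq_eq_trace, hcross, trace_add, frob_sq_eq_trace, frob_sq_eq_trace]

end Frobenius

theorem mul_pinvR_of_rank_eq {k s : ℕ} {W : Matrix (Fin k) (Fin s) ℝ} (hW : W.rank = k) :
    W * pinvR W = 1 := by
  have hGram : (W * Wᵀ).rank = k := by rw [rank_self_mul_transpose, hW]
  have hsurj : Function.Surjective (W * Wᵀ).mulVecLin := by
    rw [← LinearMap.range_eq_top]
    apply Submodule.eq_top_of_finrank_eq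
    rw [← rank, hGram, Module.finrank_fin_fun]
  rw [pinvR, ← Matrix.mul_assoc]
  exact mul_nonsing_inv _ ((isUnit_iff_isUnit_det _).mp (mulVec_surjective_iff_isUnit.mp hsurj))

section Blocks

variable {R : Type*} [Semiring R] {k m n p : ℕ}

theorem botIdx_injective (hk : k ≤ m) : Function.Injective (botIdx hk) := by
  intro a b h
  have := congrArg Fin.val h
  simp only [botIdx] at this
  exact Fin.ext (by omega)

theorem mul_eq_submatrix_castLE_add_submatrix_botIdx (hk : k ≤ n) (A : Matrix (Fin m) (Fin n) R)
    (X : Matrix (Fin n) (Fin p) R) :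
    A * X = A.submatrix id (Fin.castLE hk) * X.submatrix (Fin.castLE hk) id
      + A.submatrix id (botIdx hk) * X.submatrix (botIdx hk) id := by
  ext i j
  -- this equivalence maps the two summands onto `Fin.castLE hk` and `botIdx hk` definitionally
  simp only [Matrix.add_apply, mul_apply, Fintype.sum_sum_type,
    ← (finSumFinEquiv.trans (finCongr (Nat.add_sub_cancel' hk))).sum_comp]
  rfl

theorem mul_eq_of_submatrix_castLE_eq_zero (hk : k ≤ n) (A : Matrix (Fin m) (Fin n) R)
    {X : Matrix (Fin n) (Fin p) R} (hX : X.submatrix (Fin.castLE hk) id = 0) :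
    A * X = A.submatrix id (botIdx hk) * X.submatrix (botIdx hk) id := by
  rw [mul_eq_submatrix_castLE_add_submatrix_botIdx hk, hX, Matrix.mul_zero, zero_add]

theorem transpose_submatrix_id_mul_submatrix_id {q : ℕ} {V : Matrix (Fin n) (Fin m) R}
    (hV : Vᵀ * V = 1) (f : Fin p → Fin m) (g : Fin q → Fin m) :
    (V.submatrix id f)ᵀ * V.submatrix id g = (1 : Matrix (Fin m) (Fin m) R).submatrix f g := by
  rw [transpose_submatrix, ← submatrix_mul _ _ _ _ _ Function.bijective_id, hV]

theorem transpose_submatrix_id_mul_self {V : Matrix (Fin n) (Fin m) R}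
    (hV : Vᵀ * V = 1) {f : Fin p → Fin m} (hf : Function.Injective f) :
    (V.submatrix id f)ᵀ * V.submatrix id f = 1 := by
  rw [transpose_submatrix_id_mul_submatrix_id hV, submatrix_one _ hf]

theorem one_submatrix_botIdx_castLE (hk : k ≤ m) :
    (1 : Matrix (Fin m) (Fin m) R).submatrix (botIdx hk) (Fin.castLE hk) = 0 := by
  ext i j
  refine one_apply_ne fun h => ?_
  have := congrArg Fin.val h
  simp only [botIdx, Fin.val_castLE] at this
  omega

theorem submatrix_id_botIdx_of_diagonal (hkm : k ≤ m) (hkn : k ≤ n)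
    {D : Matrix (Fin m) (Fin n) R}
    (hD : ∀ (i : Fin m) (j : Fin n), (i : ℕ) ≠ (j : ℕ) → D i j = 0) :
    D.submatrix id (botIdx hkn)
      = (1 : Matrix (Fin m) (Fin m) R).submatrix id (botIdx hkm)
        * D.submatrix (botIdx hkm) (botIdx hkn) := by
  ext i j
  by_cases hi : k ≤ (i : ℕ)
  · obtain ⟨i', rfl⟩ : ∃ i', botIdx hkm i' = i :=
      ⟨⟨i - k, by omega⟩, Fin.ext (by simp [botIdx]; omega)⟩
    simp [mul_apply, one_apply, (botIdx_injective hkm).eq_iff]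
  · rw [submatrix_apply, hD _ _ (by simp [botIdx]; omega), mul_apply, Finset.sum_eq_zero]
    intro l _
    rw [submatrix_apply, one_apply_ne fun h => by simp [botIdx, Fin.ext_iff] at h; omega, zero_mul]

end Blocks

theorem stmt4_general {m1 m2 s k : ℕ} (hk1 : k ≤ m1) (hk2 : k ≤ m2)
    (B : Matrix (Fin m1) (Fin m2) ℝ) (Ω : Matrix (Fin m2) (Fin s) ℝ)
    (U : Matrix (Fin m1) (Fin m1) ℝ) (V : Matrix (Fin m2) (Fin m2) ℝ)
    (Sg : Matrix (Fin m1) (Fin m2) ℝ)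
    (hU : Uᵀ * U = 1)
    (hV : Vᵀ * V = 1)
    (hSg : ∀ (i : Fin m1) (j : Fin m2), (i : ℕ) ≠ (j : ℕ) → Sg i j = 0)
    (hSVD : B = U * Sg * Vᵀ)
    (hrank : ((V.submatrix id (Fin.castLE hk2))ᵀ * Ω).rank = k) :
    (frob (B * (1 - Ω * (pinvR ((V.submatrix id (Fin.castLE hk2))ᵀ * Ω)
        * (V.submatrix id (Fin.castLE hk2))ᵀ)))) ^ 2
      = (frob (Sg.submatrix (botIdx hk1) (botIdx hk2))) ^ 2
        + (frob (Sg.submatrix (botIdx hk1) (botIdx hk2)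
            * ((V.submatrix id (botIdx hk2))ᵀ * Ω)
            * pinvR ((V.submatrix id (Fin.castLE hk2))ᵀ * Ω))) ^ 2 := by
  set Vt := V.submatrix id (Fin.castLE hk2)
  set Vb := V.submatrix id (botIdx hk2)
  set W := pinvR (Vtᵀ * Ω)
  set Sb := Sg.submatrix (botIdx hk1) (botIdx hk2)
  set X := Vᵀ * (1 - Ω * (W * Vtᵀ))
  have hW : Vtᵀ * Ω * W = 1 := mul_pinvR_of_rank_eq hrank
  have hXrows {p : ℕ} (f : Fin p → Fin m2) :
      X.submatrix f id = (V.submatrix id f)ᵀ - (V.submatrix id f)ᵀ * Ω * W * Vtᵀ := by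
    rw [submatrix_mul _ _ _ _ _ Function.bijective_id, submatrix_id_id, Matrix.mul_sub,
      Matrix.mul_one]
    simp only [Matrix.mul_assoc]
    rfl
  have hXtop : X.submatrix (Fin.castLE hk2) id = 0 := by
    rw [hXrows, hW, Matrix.one_mul, sub_self]
  set E := (1 : Matrix (Fin m1) (Fin m1) ℝ).submatrix id (botIdx hk1)
  have hE : Eᵀ * E = 1 :=
    transpose_submatrix_id_mul_self (by rw [transpose_one, Matrix.one_mul]) (botIdx_injective hk1)
  calc frob (B * (1 - Ω * (W * Vtᵀ))) ^ 2
      = frob (U * (E * (Sb * X.submatrix (botIdx hk2) id))) ^ 2 := by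
        rw [hSVD, Matrix.mul_assoc, Matrix.mul_assoc,
          mul_eq_of_submatrix_castLE_eq_zero hk2 _ hXtop,
          submatrix_id_botIdx_of_diagonal hk1 hk2 hSg, Matrix.mul_assoc]
    _ = frob (Sb * Vbᵀ - Sb * (Vbᵀ * Ω) * W * Vtᵀ) ^ 2 := by
        rw [frob_mul_of_transpose_mul_self_eq_one hU, frob_mul_of_transpose_mul_self_eq_one hE,
          hXrows, Matrix.mul_sub]
        simp only [Matrix.mul_assoc]
        rfl
    _ = frob Sb ^ 2 + frob (Sb * (Vbᵀ * Ω) * W) ^ 2 := by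
        rw [frob_sq_mul_sub_mul] <;> rw [transpose_transpose]
        · exact transpose_submatrix_id_mul_self hV (botIdx_injective hk2)
        · exact transpose_submatrix_id_mul_self hV (Fin.castLE_injective hk2)
        · rw [transpose_submatrix_id_mul_submatrix_id hV, one_submatrix_botIdx_castLE hk2]

theorem stmt4 {m1 m2 s k : ℕ} (hk1 : k ≤ m1) (hk2 : k ≤ m2)
    (B : Matrix (Fin m1) (Fin m2) ℝ) (Ω : Matrix (Fin m2) (Fin s) ℝ)
    (U : Matrix (Fin m1) (Fin m1) ℝ) (V : Matrix (Fin m2) (Fin m2) ℝ)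
    (Sg : Matrix (Fin m1) (Fin m2) ℝ)
    (hU : Uᵀ * U = 1) (hU' : U * Uᵀ = 1)
    (hV : Vᵀ * V = 1) (hV' : V * Vᵀ = 1)
    (hSg : ∀ (i : Fin m1) (j : Fin m2), (i : ℕ) ≠ (j : ℕ) → Sg i j = 0)
    (hSVD : B = U * Sg * Vᵀ)
    (hrank : ((V.submatrix id (Fin.castLE hk2))ᵀ * Ω).rank = k) :
    (frob (B * (1 - Ω * (pinvR ((V.submatrix id (Fin.castLE hk2))ᵀ * Ω)
        * (V.submatrix id (Fin.castLE hk2))ᵀ)))) ^ 2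
      = (frob (Sg.submatrix (botIdx hk1) (botIdx hk2))) ^ 2
        + (frob (Sg.submatrix (botIdx hk1) (botIdx hk2)
            * ((V.submatrix id (botIdx hk2))ᵀ * Ω)
            * pinvR ((V.submatrix id (Fin.castLE hk2))ᵀ * Ω))) ^ 2 :=
  stmt4_general hk1 hk2 B Ω U V Sg hU hV hSg hSVD hrank
end
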